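/- arXiv:1702.07529 — 5 statements merged into one kernel-verified Lean document; each statement's English description precedes it below -/
import Mathlib

section
/- For w ∈ H¹₀(Ω)³ with Ω = 𝕋² × (h₋, h₊), h₋ < 0 < h₊, and any vector ν = (ν₁, ν₂, 1), the trace on Σ = 𝕋² × {0} satisfies |w₃|²_{L²(Σ)} ≤ (h₋h₊/(h₋-h₊)) ‖ν·∇w₃‖²_{L²(Ω)}. Note h₋h₊/(h₋-h₊) > 0 since h₋ < 0 < h₊. -/
open MeasureTheory Real Set

/- Along the line through `x ∈ Σ` in direction `ν`, `u(t) = f(x + t ν)` vanishes at `t = h₋` and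
`t = h₊` because `ν₃ = 1`. The fundamental theorem of calculus and Cauchy–Schwarz on `[h₋, 0]` and
on `[0, h₊]` give `u(0)² ≤ -h₋ ∫_{h₋}^0 u'²` and `u(0)² ≤ h₊ ∫_0^{h₊} u'²`, which combine to
`u(0)² ≤ h₋h₊/(h₋-h₊) ∫_{h₋}^{h₊} u'²` with `u' = ν·∇f`. Integrating over the periodicity cell of
`Σ`, exchanging the order of integration and undoing the horizontal shear `p ↦ p + t (ν₁, ν₂)`,
which preserves integrals over a cell by periodicity, turns the right side into the integral
over `Ω`. -/

/-- The partial derivative `∂ᵢ f` of a scalar function on `ℝ³`. -/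
noncomputable def pd (i : Fin 3) (f : (Fin 3 → ℝ) → ℝ) (x : Fin 3 → ℝ) : ℝ :=
  fderiv ℝ f x (Pi.single i 1)

/-- The horizontally periodic slab `Ω = 𝕋² × (h₋, h₊)`, realized as one periodicity cell. -/
def slab (hm hp L₁ L₂ : ℝ) : Set (Fin 3 → ℝ) :=
  {x | x 0 ∈ Ioo 0 (2 * π * L₁) ∧ x 1 ∈ Ioo 0 (2 * π * L₂) ∧ x 2 ∈ Ioo hm hp}

theorem sq_integral_mul_le {α : Type*} [MeasurableSpace α] {μ : Measure α} {f g : α → ℝ}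
    (hf : MemLp f 2 μ) (hg : MemLp g 2 μ) :
    (∫ a, f a * g a ∂μ) ^ 2 ≤ (∫ a, f a ^ 2 ∂μ) * ∫ a, g a ^ 2 ∂μ := by
  have hinner {u v : α → ℝ} (hu : MemLp u 2 μ) (hv : MemLp v 2 μ) :
      inner ℝ (hu.toLp u) (hv.toLp v) = ∫ a, u a * v a ∂μ := by
    rw [L2.inner_def]
    refine integral_congr_ae ?_
    filter_upwards [hu.coeFn_toLp, hv.coeFn_toLp] with a hua hva
    simp [hua, hva, mul_comm]
  simpa only [hinner, sq] using real_inner_mul_inner_self_le (hf.toLp f) (hg.toLp g)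

theorem sq_intervalIntegral_le {a b : ℝ} (hab : a ≤ b) {h : ℝ → ℝ}
    (hh : ContinuousOn h (Icc a b)) :
    (∫ t in a..b, h t) ^ 2 ≤ (b - a) * ∫ t in a..b, h t ^ 2 := by
  have hmem : MemLp h 2 (volume.restrict (Ioc a b)) :=
    (memLp_two_iff_integrable_sq
      ((hh.mono Ioc_subset_Icc_self).aestronglyMeasurable measurableSet_Ioc)).2
      (((hh.pow 2).integrableOn_Icc).mono_set Ioc_subset_Icc_self)
  have hcs := sq_integral_mul_le (memLp_const (1 : ℝ)) hmem
  simp only [one_mul, one_pow, integral_const, measureReal_restrict_apply_univ,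
    Real.volume_real_Ioc_of_le hab, smul_eq_mul, mul_one] at hcs
  rwa [intervalIntegral.integral_of_le hab, intervalIntegral.integral_of_le hab]

theorem sq_le_mul_integral_deriv_sq {a b : ℝ} (ha : a < 0) (hb : 0 < b) {u u' : ℝ → ℝ}
    (hu : ∀ t ∈ Icc a b, HasDerivAt u (u' t) t) (hu' : ContinuousOn u' (Icc a b))
    (hua : u a = 0) (hub : u b = 0) :
    u 0 ^ 2 ≤ a * b / (a - b) * ∫ t in Ioo a b, u' t ^ 2 := by
  have hsub₁ : Icc a 0 ⊆ Icc a b := Icc_subset_Icc le_rfl hb.le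
  have hsub₂ : Icc 0 b ⊆ Icc a b := Icc_subset_Icc ha.le le_rfl
  have hftc₁ : ∫ t in a..0, u' t = u 0 := by
    rw [intervalIntegral.integral_eq_sub_of_hasDerivAt (fun t ht => hu t ?_)
      ((hu'.mono hsub₁).intervalIntegrable_of_Icc ha.le), hua, sub_zero]
    exact hsub₁ (uIcc_of_le ha.le ▸ ht)
  have hftc₂ : ∫ t in (0 : ℝ)..b, u' t = -u 0 := by
    rw [intervalIntegral.integral_eq_sub_of_hasDerivAt (fun t ht => hu t ?_)
      ((hu'.mono hsub₂).intervalIntegrable_of_Icc hb.le), hub, zero_sub]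
    exact hsub₂ (uIcc_of_le hb.le ▸ ht)
  have hcs₁ := sq_intervalIntegral_le ha.le (hu'.mono hsub₁)
  have hcs₂ := sq_intervalIntegral_le hb.le (hu'.mono hsub₂)
  rw [hftc₁] at hcs₁
  rw [hftc₂, neg_sq] at hcs₂
  have hsplit : ∫ t in Ioo a b, u' t ^ 2 =
      (∫ t in a..0, u' t ^ 2) + ∫ t in (0 : ℝ)..b, u' t ^ 2 := by
    rw [intervalIntegral.integral_add_adjacent_intervals (f := fun t => u' t ^ 2)
        (((hu'.mono hsub₁).pow 2).intervalIntegrable_of_Icc ha.le)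
        (((hu'.mono hsub₂).pow 2).intervalIntegrable_of_Icc hb.le),
      intervalIntegral.integral_of_le (ha.trans hb).le, integral_Ioc_eq_integral_Ioo]
  rw [hsplit, div_mul_eq_mul_div, le_div_iff_of_neg (by linarith)]
  nlinarith [mul_le_mul_of_nonneg_left hcs₁ hb.le,
    mul_le_mul_of_nonneg_left hcs₂ (neg_nonneg.2 ha.le)]

theorem sq_le_mul_integral_fderiv_sq {E : Type*} [NormedAddCommGroup E] [NormedSpace ℝ E]
    {f : E → ℝ} (hf : ContDiff ℝ 1 f) (x v : E) {a b : ℝ} (ha : a < 0) (hb : 0 < b)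
    (hfa : f (x + a • v) = 0) (hfb : f (x + b • v) = 0) :
    f x ^ 2 ≤ a * b / (a - b) * ∫ t in Ioo a b, fderiv ℝ f (x + t • v) v ^ 2 := by
  have hderiv (t : ℝ) : HasDerivAt (fun s : ℝ => f (x + s • v)) (fderiv ℝ f (x + t • v) v) t := by
    have h := ((hf.differentiable one_ne_zero) (x + t • v)).hasFDerivAt.comp_hasDerivAt t
      (((hasDerivAt_id t).smul_const v).const_add x)
    rwa [one_smul] at h
  have hcont : Continuous fun t : ℝ => fderiv ℝ f (x + t • v) v :=
    ((hf.continuous_fderiv one_ne_zero).comp (by fun_prop)).clm_apply continuous_const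
  simpa using sq_le_mul_integral_deriv_sq ha hb (fun t _ => hderiv t) hcont.continuousOn hfa hfb

theorem Function.Periodic.fderiv {𝕜 E F : Type*} [NontriviallyNormedField 𝕜]
    [NormedAddCommGroup E] [NormedSpace 𝕜 E] [NormedAddCommGroup F] [NormedSpace 𝕜 F]
    {f : E → F} {c : E} (hf : Function.Periodic f c) : Function.Periodic (fderiv 𝕜 f) c := by
  intro x
  rw [← fderiv_comp_add_right, show (fun y => f (y + c)) = f from funext hf]

theorem Continuous.integrableOn_of_isBounded {X E : Type*} [MetricSpace X] [ProperSpace X]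
    [MeasurableSpace X] [OpensMeasurableSpace X] [NormedAddCommGroup E] {μ : Measure X}
    [IsFiniteMeasureOnCompacts μ] {f : X → E} (hf : Continuous f) {s : Set X}
    (hs : Bornology.IsBounded s) : IntegrableOn f s μ :=
  (hf.continuousOn.integrableOn_compact hs.isCompact_closure).mono_set subset_closure

theorem Function.Periodic.setIntegral_Ioo_comp_add {E : Type*} [NormedAddCommGroup E]
    [NormedSpace ℝ E] {h : ℝ → E} {T : ℝ} (hh : Function.Periodic h T) (c : ℝ) :
    ∫ s in Ioo 0 T, h (s + c) = ∫ s in Ioo 0 T, h s := by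
  rcases le_or_gt T 0 with hT | hT
  · simp [Ioo_eq_empty hT.not_gt]
  rw [← integral_Ioc_eq_integral_Ioo, ← integral_Ioc_eq_integral_Ioo,
    ← intervalIntegral.integral_of_le hT.le, ← intervalIntegral.integral_of_le hT.le,
    intervalIntegral.integral_comp_add_right, zero_add, add_comm T,
    hh.intervalIntegral_add_eq c 0, zero_add]

theorem setIntegral_Ioo_prod_Ioo_comp_add {F : ℝ × ℝ → ℝ} (hF : Continuous F) {a b : ℝ}
    (h₁ : Function.Periodic F (a, 0)) (h₂ : Function.Periodic F (0, b)) (c : ℝ × ℝ) :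
    ∫ p in Ioo 0 a ×ˢ Ioo 0 b, F (p + c) = ∫ p in Ioo 0 a ×ˢ Ioo 0 b, F p := by
  have hbox : Bornology.IsBounded (Ioo 0 a ×ˢ Ioo 0 b) :=
    (Metric.isBounded_Ioo 0 a).prod (Metric.isBounded_Ioo 0 b)
  have hint (d : ℝ) : IntegrableOn (fun p : ℝ × ℝ => F (p.1 + d, p.2)) (Ioo 0 a ×ˢ Ioo 0 b)
      ((volume : Measure ℝ).prod volume) :=
    (hF.comp (by fun_prop)).integrableOn_of_isBounded hbox
  have hswap (d : ℝ) : ∫ x in Ioo 0 a, ∫ y in Ioo 0 b, F (x + d, y)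
      = ∫ y in Ioo 0 b, ∫ x in Ioo 0 a, F (x + d, y) :=
    integral_integral_swap (by rw [Measure.prod_restrict]; exact hint d)
  calc ∫ p in Ioo 0 a ×ˢ Ioo 0 b, F (p + c)
      = ∫ x in Ioo 0 a, ∫ y in Ioo 0 b, F (x + c.1, y + c.2) :=
        setIntegral_prod _ ((hF.comp (by fun_prop)).integrableOn_of_isBounded hbox)
    _ = ∫ x in Ioo 0 a, ∫ y in Ioo 0 b, F (x + c.1, y) := by
        congr 1 with x
        exact Function.Periodic.setIntegral_Ioo_comp_add (h := fun y => F (x + c.1, y))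
          (fun y => by simpa using h₂ (x + c.1, y)) c.2
    _ = ∫ y in Ioo 0 b, ∫ x in Ioo 0 a, F (x + c.1, y) := hswap c.1
    _ = ∫ y in Ioo 0 b, ∫ x in Ioo 0 a, F (x, y) := by
        congr 1 with y
        exact Function.Periodic.setIntegral_Ioo_comp_add (h := fun x => F (x, y))
          (fun x => by simpa using h₁ (x, y)) c.1
    _ = ∫ x in Ioo 0 a, ∫ y in Ioo 0 b, F (x, y) := by simpa using (hswap 0).symm
    _ = ∫ p in Ioo 0 a ×ˢ Ioo 0 b, F p := (setIntegral_prod _ (by simpa using hint 0)).symm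

theorem setIntegral_Ioo_prod_Ioo_comp_add_smul {G : (Fin 3 → ℝ) → ℝ} (hG : Continuous G)
    {a b : ℝ} (h₁ : Function.Periodic G (a • Pi.single 0 1))
    (h₂ : Function.Periodic G (b • Pi.single 1 1)) {ν : Fin 3 → ℝ} (hν : ν 2 = 1) (t : ℝ) :
    ∫ p in Ioo 0 a ×ˢ Ioo 0 b, G (![p.1, p.2, 0] + t • ν) =
      ∫ p in Ioo 0 a ×ˢ Ioo 0 b, G ![p.1, p.2, t] := by
  have hline (p : ℝ × ℝ) :
      ![p.1, p.2, 0] + t • ν = ![(p + t • (ν 0, ν 1)).1, (p + t • (ν 0, ν 1)).2, t] := by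
    funext i; fin_cases i <;> simp [hν]
  simp only [hline]
  refine setIntegral_Ioo_prod_Ioo_comp_add (F := fun p => G ![p.1, p.2, t]) (by fun_prop)
    (fun p => ?_) (fun p => ?_) _
  · have h : ![p.1 + a, p.2, t] = ![p.1, p.2, t] + a • Pi.single 0 1 := by
      funext i; fin_cases i <;> simp
    simp only [Prod.fst_add, Prod.snd_add, add_zero, h, h₁ _]
  · have h : ![p.1, p.2 + b, t] = ![p.1, p.2, t] + b • Pi.single 1 1 := by
      funext i; fin_cases i <;> simp
    simp only [Prod.fst_add, Prod.snd_add, add_zero, h, h₂ _]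

theorem fderiv_apply_eq_sum_pd (f : (Fin 3 → ℝ) → ℝ) (x ν : Fin 3 → ℝ) :
    fderiv ℝ f x ν = ∑ i, ν i * pd i f x := by
  conv_lhs => rw [pi_eq_sum_univ' ν]
  simp [map_sum, pd]

theorem setIntegral_slab (hm hp L₁ L₂ : ℝ) {G : (Fin 3 → ℝ) → ℝ} (hG : Continuous G) :
    ∫ x in slab hm hp L₁ L₂, G x =
      ∫ t in Ioo hm hp, ∫ p in Ioo 0 (2 * π * L₁) ×ˢ Ioo 0 (2 * π * L₂), G ![p.1, p.2, t] := by
  let e : (Fin 3 → ℝ) ≃ᵐ ℝ × ℝ × ℝ := (MeasurableEquiv.piFinSuccAbove (fun _ => ℝ) 2).trans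
    ((MeasurableEquiv.refl ℝ).prodCongr MeasurableEquiv.finTwoArrow)
  have he : MeasurePreserving e volume volume :=
    ((MeasurePreserving.id volume).prod (volume_preserving_finTwoArrow ℝ)).comp
      (volume_preserving_piFinSuccAbove (fun _ => ℝ) 2)
  have he_apply (x : Fin 3 → ℝ) : e x = (x 2, x 0, x 1) := rfl
  have hslab : slab hm hp L₁ L₂ =
      e ⁻¹' (Ioo hm hp ×ˢ (Ioo 0 (2 * π * L₁) ×ˢ Ioo 0 (2 * π * L₂))) := by
    ext x
    simp only [slab, mem_preimage, he_apply, mem_prod, mem_ofPred_eq]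
    tauto
  have hbox : Bornology.IsBounded (Ioo hm hp ×ˢ (Ioo 0 (2 * π * L₁) ×ˢ Ioo 0 (2 * π * L₂))) :=
    (Metric.isBounded_Ioo _ _).prod ((Metric.isBounded_Ioo _ _).prod (Metric.isBounded_Ioo _ _))
  have hG' : Continuous fun z : ℝ × ℝ × ℝ => G ![z.2.1, z.2.2, z.1] := hG.comp (by fun_prop)
  rw [hslab, ← setIntegral_prod _ (hG'.integrableOn_of_isBounded hbox)]
  refine Eq.trans ?_ (he.setIntegral_preimage_emb e.measurableEmbedding _ _)
  congr 1 with x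
  exact congrArg G (FinVec.etaExpand_eq x).symm

theorem directional_trace_estimate_general
    (hm hp L₁ L₂ : ℝ) (hhm : hm < 0) (hhp : 0 < hp)
    (f : (Fin 3 → ℝ) → ℝ) (hf : ContDiff ℝ 1 f)
    (hper₁ : ∀ x, f (x + (2 * π * L₁) • (Pi.single 0 1 : Fin 3 → ℝ)) = f x)
    (hper₂ : ∀ x, f (x + (2 * π * L₂) • (Pi.single 1 1 : Fin 3 → ℝ)) = f x)
    (hbc : ∀ x : Fin 3 → ℝ, x 2 = hm ∨ x 2 = hp → f x = 0)
    (ν : Fin 3 → ℝ) (hν : ν 2 = 1) :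
    (∫ p in (Ioo 0 (2 * π * L₁)) ×ˢ (Ioo 0 (2 * π * L₂)),
        (f ![p.1, p.2, (0 : ℝ)]) ^ 2) ≤
      (hm * hp / (hm - hp)) *
        ∫ x in slab hm hp L₁ L₂, (∑ i, ν i * pd i f x) ^ 2 := by
  set R := Ioo 0 (2 * π * L₁) ×ˢ Ioo 0 (2 * π * L₂)
  set g : (Fin 3 → ℝ) → ℝ := fun x => fderiv ℝ f x ν
  have hg : Continuous g := (hf.continuous_fderiv one_ne_zero).clm_apply continuous_const
  have hg_per {c : Fin 3 → ℝ} (h : Function.Periodic f c) : Function.Periodic (g · ^ 2) c :=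
    fun x => congrArg (· ^ 2) (DFunLike.congr_fun (h.fderiv x) ν)
  have hint : Integrable (fun z : (ℝ × ℝ) × ℝ => g (![z.1.1, z.1.2, 0] + z.2 • ν) ^ 2)
      ((volume.restrict R).prod (volume.restrict (Ioo hm hp))) := by
    rw [Measure.prod_restrict]
    exact ((hg.comp (by fun_prop)).pow 2).integrableOn_of_isBounded
      (((Metric.isBounded_Ioo _ _).prod (Metric.isBounded_Ioo _ _)).prod (Metric.isBounded_Ioo _ _))
  calc ∫ p in R, f ![p.1, p.2, 0] ^ 2
      ≤ ∫ p in R, hm * hp / (hm - hp) * ∫ t in Ioo hm hp, g (![p.1, p.2, 0] + t • ν) ^ 2 :=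
        setIntegral_mono_on (((hf.continuous.comp (by fun_prop)).pow 2).integrableOn_of_isBounded
            ((Metric.isBounded_Ioo _ _).prod (Metric.isBounded_Ioo _ _)))
          (hint.integral_prod_left.const_mul _) (measurableSet_Ioo.prod measurableSet_Ioo)
          fun p _ => sq_le_mul_integral_fderiv_sq hf _ ν hhm hhp
            (hbc _ (Or.inl (by simp [hν]))) (hbc _ (Or.inr (by simp [hν])))
    _ = hm * hp / (hm - hp) * ∫ t in Ioo hm hp, ∫ p in R, g (![p.1, p.2, 0] + t • ν) ^ 2 := by
        rw [integral_const_mul, integral_integral_swap hint]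
    _ = hm * hp / (hm - hp) * ∫ t in Ioo hm hp, ∫ p in R, g ![p.1, p.2, t] ^ 2 := by
        congr 1
        exact integral_congr_ae (ae_of_all _ fun t =>
          setIntegral_Ioo_prod_Ioo_comp_add_smul (hg.pow 2) (hg_per hper₁) (hg_per hper₂) hν t)
    _ = hm * hp / (hm - hp) * ∫ x in slab hm hp L₁ L₂, (∑ i, ν i * pd i f x) ^ 2 := by
        rw [← setIntegral_slab hm hp L₁ L₂ (G := fun x => g x ^ 2) (hg.pow 2)]
        simp only [g, fderiv_apply_eq_sum_pd]

/-- Directional trace estimate: for a scalar `w₃ ∈ H¹₀(Ω)` with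
`h₋ < 0 < h₊` and any `ν = (ν₁, ν₂, 1)`, the trace on `Σ = 𝕋² × {0}` satisfies
`|w₃|²_{L²(Σ)} ≤ (h₋h₊/(h₋-h₊)) ‖ν·∇w₃‖²_{L²(Ω)}`. -/
theorem directional_trace_estimate
    (hm hp L₁ L₂ : ℝ) (hhm : hm < 0) (hhp : 0 < hp) (hL₁ : 0 < L₁) (hL₂ : 0 < L₂)
    (f : (Fin 3 → ℝ) → ℝ) (hf : ContDiff ℝ 1 f)
    (hper₁ : ∀ x, f (x + (2 * π * L₁) • (Pi.single 0 1 : Fin 3 → ℝ)) = f x)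
    (hper₂ : ∀ x, f (x + (2 * π * L₂) • (Pi.single 1 1 : Fin 3 → ℝ)) = f x)
    (hbc : ∀ x : Fin 3 → ℝ, x 2 = hm ∨ x 2 = hp → f x = 0)
    (ν : Fin 3 → ℝ) (hν : ν 2 = 1) :
    (∫ p in (Ioo 0 (2 * π * L₁)) ×ˢ (Ioo 0 (2 * π * L₂)),
        (f ![p.1, p.2, (0 : ℝ)]) ^ 2) ≤
      (hm * hp / (hm - hp)) *
        ∫ x in slab hm hp L₁ L₂, (∑ i, ν i * pd i f x) ^ 2 :=
  directional_trace_estimate_general hm hp L₁ L₂ hhm hhp f hf hper₁ hper₂ hbc ν hν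
end

section
/- Let E : H¹₀ → ℝ and Ψ : H¹₀ → [0,∞) with Ψ(w) ≥ c‖w‖²₁ (Korn) and E(w) ≤ C Ψ(w) for all w. For s > 0 define α(s) := sup{E(w) - sΨ(w) : w ∈ 𝒜}, where 𝒜 = {w ∈ H¹₀ : ‖√ρ̄ w‖₀ = 1}. Then: (i) α is strictly decreasing on (0,∞); (ii) α is locally Lipschitz continuous on (0,∞); (iii) if α(s₀) > 0 for some s₀ and α(s₁) < 0 for some s₁ > s₀, then there exists a unique Λ > 0 with Λ² = α(Λ) = sup_{w∈𝒜}(E(w) - ΛΨ(w)). -/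
open Set Filter Topology

/-!
`α` is the upper envelope of the affine functions `s ↦ E w - s Ψ w`, `w ∈ 𝒜`, and the supremum is
attained. An upper envelope is convex, hence locally Lipschitz on the open half-line; since every
slope `-Ψ w` is negative (by Korn, `Ψ w ≥ c ‖w‖² > 0` on `𝒜`), it is strictly decreasing. Then
`s ↦ s² - α s` is continuous and strictly increasing, negative near `0` and positive at `s₁`, so it
has exactly one zero.
-/

section UpperEnvelope

variable {ι : Type*} {A : Set ι} {E Ψ : ι → ℝ} {α : ℝ → ℝ} {D : Set ℝ}

theorem convexOn_of_isGreatest (hD : Convex ℝ D)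
    (hmax : ∀ s ∈ D, IsGreatest ((fun w => E w - s * Ψ w) '' A) (α s)) :
    ConvexOn ℝ D α := by
  refine ⟨hD, fun x hx y hy a b ha hb hab => ?_⟩
  obtain ⟨⟨v, hv, hαv⟩, -⟩ := hmax _ (hD hx hy ha hb hab)
  have hx' : E v - x * Ψ v ≤ α x := (hmax x hx).2 ⟨v, hv, rfl⟩
  have hy' : E v - y * Ψ v ≤ α y := (hmax y hy).2 ⟨v, hv, rfl⟩
  calc α (a • x + b • y) = a * (E v - x * Ψ v) + b * (E v - y * Ψ v) := by
        rw [← hαv, smul_eq_mul, smul_eq_mul]; linear_combination (-E v) * hab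
    _ ≤ a • α x + b • α y := by
        rw [smul_eq_mul, smul_eq_mul]; gcongr

theorem strictAntiOn_of_isGreatest (hΨ : ∀ w ∈ A, 0 < Ψ w)
    (hmax : ∀ s ∈ D, IsGreatest ((fun w => E w - s * Ψ w) '' A) (α s)) :
    StrictAntiOn α D := by
  intro s hs t ht hst
  obtain ⟨⟨v, hv, hαv⟩, -⟩ := hmax t ht
  calc α t = E v - t * Ψ v := hαv.symm
    _ < E v - s * Ψ v := by gcongr; exact hΨ v hv
    _ ≤ α s := (hmax s hs).2 ⟨v, hv, rfl⟩

end UpperEnvelope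

theorem ConvexOn.exists_abs_sub_le_of_isCompact {U K : Set ℝ} {f : ℝ → ℝ}
    (hf : ConvexOn ℝ U f) (hU : IsOpen U) (hK : IsCompact K) (hKU : K ⊆ U) :
    ∃ q : ℝ, ∀ x ∈ K, ∀ y ∈ K, |f x - f y| ≤ q * |x - y| := by
  obtain ⟨q, hq⟩ := ((hf.locallyLipschitzOn hU).mono hKU).exists_lipschitzOnWith_of_compact hK
  exact ⟨q, fun x hx y hy => hq.dist_le_mul x hx y hy⟩

theorem existsUnique_sq_eq_of_strictAntiOn {α : ℝ → ℝ} {s₀ s₁ : ℝ}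
    (hcont : ContinuousOn α (Ioi 0)) (hanti : StrictAntiOn α (Ioi 0))
    (hs₀ : 0 < s₀) (hs : s₀ < s₁) (hα₀ : 0 < α s₀) (hα₁ : α s₁ < 0) :
    ∃! Λ : ℝ, 0 < Λ ∧ Λ ^ 2 = α Λ := by
  have hmono : StrictMonoOn (fun s => s ^ 2 - α s) (Ioi 0) := fun x hx y hy hxy => by
    have := hanti hx hy hxy
    have : x ^ 2 < y ^ 2 := by gcongr; exact le_of_lt hx
    simp only; linarith
  obtain ⟨a, ⟨ha_sq, ha_le⟩, ha⟩ : ∃ a, (a ^ 2 < α s₀ ∧ a < s₀) ∧ 0 < a := by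
    have hsq : Tendsto (fun a : ℝ => a ^ 2) (𝓝[>] 0) (𝓝 0) := by
      simpa using ((continuous_pow 2).tendsto (0 : ℝ)).mono_left nhdsWithin_le_nhds
    exact (((hsq.eventually (gt_mem_nhds hα₀)).and
      (nhdsWithin_le_nhds (gt_mem_nhds hs₀))).and self_mem_nhdsWithin).exists
  have hga : a ^ 2 - α a < 0 := by linarith [hanti ha hs₀ ha_le]
  have hgs₁ : 0 < s₁ ^ 2 - α s₁ := by linarith [sq_nonneg s₁]
  have hsub : Icc a s₁ ⊆ Ioi 0 := fun x hx => ha.trans_le hx.1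
  obtain ⟨Λ, hΛ, hΛ0⟩ := intermediate_value_Icc (ha_le.trans hs).le
    ((continuousOn_pow 2).sub (hcont.mono hsub)) ⟨hga.le, hgs₁.le⟩
  replace hΛ0 : Λ ^ 2 - α Λ = 0 := hΛ0
  refine ⟨Λ, ⟨hsub hΛ, by linarith⟩, fun y ⟨hy, hyΛ⟩ => ?_⟩
  exact hmono.injOn hy (hsub hΛ) (by linarith)

theorem modified_variational_principle_general
    (V : Type*) [NormedAddCommGroup V]
    (E Ψ N : V → ℝ) (c : ℝ) (hc : 0 < c)
    (hKorn : ∀ w, c * ‖w‖ ^ 2 ≤ Ψ w)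
    (hN0 : N 0 = 0)
    (α : ℝ → ℝ)
    (hα : ∀ s, α s = sSup ((fun w => E w - s * Ψ w) '' {w | N w = 1}))
    (hatt : ∀ s > (0 : ℝ), ∃ v, N v = 1 ∧
      IsGreatest ((fun w => E w - s * Ψ w) '' {w | N w = 1}) (E v - s * Ψ v)) :
    StrictAntiOn α (Ioi 0) ∧
    (∀ b₁ b₂ : ℝ, 0 < b₁ → b₁ < b₂ → ∃ q : ℝ, ∀ s₁ ∈ Icc b₁ b₂, ∀ s₂ ∈ Icc b₁ b₂,
      |α s₁ - α s₂| ≤ q * |s₁ - s₂|) ∧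
    (∀ s₀ s₁ : ℝ, 0 < s₀ → s₀ < s₁ → 0 < α s₀ → α s₁ < 0 →
      ∃! Λ : ℝ, 0 < Λ ∧ Λ ^ 2 = α Λ) := by
  have hΨ : ∀ w ∈ {w | N w = 1}, 0 < Ψ w := fun w hw => by
    have hw0 : w ≠ 0 := by rintro rfl; simp [hN0] at hw
    have := norm_pos_iff.2 hw0
    exact (by positivity : 0 < c * ‖w‖ ^ 2).trans_le (hKorn w)
  have hmax : ∀ s ∈ Ioi (0 : ℝ),
      IsGreatest ((fun w => E w - s * Ψ w) '' {w | N w = 1}) (α s) := fun s hs => by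
    obtain ⟨v, -, hv⟩ := hatt s hs
    rwa [hα, hv.csSup_eq]
  have hconv := convexOn_of_isGreatest (convex_Ioi 0) hmax
  have hanti := strictAntiOn_of_isGreatest hΨ hmax
  refine ⟨hanti, fun b₁ b₂ hb₁ _ => ?_, fun s₀ s₁ hs₀ hs hα₀ hα₁ => ?_⟩
  · exact hconv.exists_abs_sub_le_of_isCompact isOpen_Ioi isCompact_Icc
      fun x hx => hb₁.trans_le hx.1
  · exact existsUnique_sq_eq_of_strictAntiOn (hconv.continuousOn isOpen_Ioi) hanti
      hs₀ hs hα₀ hα₁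

/-- Properties of the modified variational functional
`α(s) = sup{E(w) - sΨ(w) : w ∈ 𝒜}` where `𝒜 = {w : ‖√ρ̄ w‖₀ = 1}`:
(i) `α` is strictly decreasing on `(0,∞)`;
(ii) `α` is locally Lipschitz on `(0,∞)`;
(iii) if `α(s₀) > 0` and `α(s₁) < 0` for some `0 < s₀ < s₁`, there is a unique
`Λ > 0` with `Λ² = α(Λ)`. -/
theorem modified_variational_principle
    (V : Type*) [NormedAddCommGroup V] [NormedSpace ℝ V]
    (E Ψ N : V → ℝ) (c C : ℝ) (hc : 0 < c)
    (hKorn : ∀ w, c * ‖w‖ ^ 2 ≤ Ψ w) (hΨ0 : ∀ w, 0 ≤ Ψ w)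
    (hEC : ∀ w, E w ≤ C * Ψ w)
    (hN0 : N 0 = 0)
    (hne : {w : V | N w = 1}.Nonempty)
    (α : ℝ → ℝ)
    (hα : ∀ s, α s = sSup ((fun w => E w - s * Ψ w) '' {w | N w = 1}))
    (hatt : ∀ s > (0 : ℝ), ∃ v, N v = 1 ∧
      IsGreatest ((fun w => E w - s * Ψ w) '' {w | N w = 1}) (E v - s * Ψ v)) :
    StrictAntiOn α (Ioi 0) ∧
    (∀ b₁ b₂ : ℝ, 0 < b₁ → b₁ < b₂ → ∃ q : ℝ, ∀ s₁ ∈ Icc b₁ b₂, ∀ s₂ ∈ Icc b₁ b₂,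
      |α s₁ - α s₂| ≤ q * |s₁ - s₂|) ∧
    (∀ s₀ s₁ : ℝ, 0 < s₀ → s₀ < s₁ → 0 < α s₀ → α s₁ < 0 →
      ∃! Λ : ℝ, 0 < Λ ∧ Λ ^ 2 = α Λ) :=
  modified_variational_principle_general V E Ψ N c hc hKorn hN0 α hα hatt
end

section
/- Suppose y : [0,∞) → [0,∞) is absolutely continuous, satisfies y' + c y^{4/3}/I₀^{1/3} ≤ 0 with c, I₀ > 0 and y(0) ≤ I₀. Then y(t) ≤ I₀ / ((I₀/y(0))^{1/3} + c t/3)³ for all t ≥ 0; in particular y(t) ≲ I₀/(1 + t³). -/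
open Set Real

/-- Nonlinear Gronwall-type decay: if `y ≥ 0` satisfies
`y' + c y^{4/3}/I₀^{1/3} ≤ 0` on `[0,∞)` with `y(0) ≤ I₀`, then
`y(t) ≤ I₀ / ((I₀/y(0))^{1/3} + c t/3)³` for all `t ≥ 0`. -/
theorem nonlinear_gronwall_decay
    (c I₀ : ℝ) (hc : 0 < c) (hI₀ : 0 < I₀)
    (y y' : ℝ → ℝ)
    (hderiv : ∀ t ∈ Ici (0 : ℝ), HasDerivAt y (y' t) t)
    (hpos : ∀ t ∈ Ici (0 : ℝ), 0 ≤ y t)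
    (hineq : ∀ t ∈ Ici (0 : ℝ),
      y' t + c * (y t) ^ ((4 : ℝ) / 3) / I₀ ^ ((1 : ℝ) / 3) ≤ 0)
    (h0 : y 0 ≤ I₀) :
    ∀ t ∈ Ici (0 : ℝ),
      y t ≤ I₀ / ((I₀ / y 0) ^ ((1 : ℝ) / 3) + c * t / 3) ^ 3 := by
  have hI3 : (0:ℝ) < I₀ ^ ((1:ℝ)/3) := Real.rpow_pos_of_pos hI₀ _
  have hy'le : ∀ s ∈ Ici (0:ℝ), y' s ≤ 0 := by
    intro s hs
    have h1 := hineq s hs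
    have h2 : 0 ≤ c * (y s) ^ ((4:ℝ)/3) / I₀ ^ ((1:ℝ)/3) := by
      apply div_nonneg _ hI3.le
      exact mul_nonneg hc.le (Real.rpow_nonneg (hpos s hs) _)
    linarith
  have hanti : AntitoneOn y (Ici (0:ℝ)) := by
    apply antitoneOn_of_deriv_nonpos (convex_Ici 0)
    · exact fun s hs => (hderiv s hs).continuousAt.continuousWithinAt
    · intro s hs
      rw [interior_Ici] at hs
      exact (hderiv s (le_of_lt (mem_Ioi.mp hs))).differentiableAt.differentiableWithinAt
    · intro s hs
      rw [interior_Ici] at hs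
      rw [(hderiv s (le_of_lt (mem_Ioi.mp hs))).deriv]
      exact hy'le s (le_of_lt (mem_Ioi.mp hs))
  intro t ht
  have ht0 : (0:ℝ) ≤ t := ht
  rcases eq_or_lt_of_le (hpos t ht) with hyt | hyt
  · rw [← hyt]
    apply div_nonneg hI₀.le
    apply pow_nonneg
    have : (0:ℝ) ≤ (I₀ / y 0) ^ ((1:ℝ)/3) := Real.rpow_nonneg (div_nonneg hI₀.le (hpos 0 Set.self_mem_Ici)) _
    nlinarith
  -- y positive on [0,t]
  have hys : ∀ s ∈ Icc (0:ℝ) t, 0 < y s := by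
    intro s hs
    exact lt_of_lt_of_le hyt (hanti hs.1 ht hs.2)
  have hy0 : 0 < y 0 := hys 0 ⟨le_rfl, ht0⟩
  set m : ℝ := c / (3 * I₀ ^ ((1:ℝ)/3)) with hm_def
  have hm : 0 < m := by positivity
  set w : ℝ → ℝ := fun s => (y s) ^ (-(1:ℝ)/3) - m * s with hw_def
  -- key derivative fact
  have hwderiv : ∀ s ∈ Icc (0:ℝ) t,
      HasDerivAt w ((-(1:ℝ)/3) * (y s) ^ ((-(1:ℝ)/3) - 1) * y' s - m) s := by
    intro s hs
    have h1 : HasDerivAt (fun u => (y u) ^ (-(1:ℝ)/3))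
        ((-(1:ℝ)/3) * (y s) ^ ((-(1:ℝ)/3) - 1) * y' s) s := by
      have := (hderiv s hs.1).rpow_const (p := -(1:ℝ)/3) (Or.inl (hys s hs).ne')
      convert this using 1; ring
    have h2 : HasDerivAt (fun u : ℝ => m * u) m s := by
      simpa using (hasDerivAt_id s).const_mul m
    exact h1.sub h2
  have hwderiv_nonneg : ∀ s ∈ Icc (0:ℝ) t,
      0 ≤ (-(1:ℝ)/3) * (y s) ^ ((-(1:ℝ)/3) - 1) * y' s - m := by
    intro s hs
    have hyspos := hys s hs
    have h1 : y' s ≤ -(c * (y s) ^ ((4:ℝ)/3) / I₀ ^ ((1:ℝ)/3)) := by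
      have := hineq s hs.1; linarith
    have hexp : (-(1:ℝ)/3) - 1 = -((4:ℝ)/3) := by norm_num
    have hpow : (y s) ^ ((-(1:ℝ)/3) - 1) = ((y s) ^ ((4:ℝ)/3))⁻¹ := by
      rw [hexp, Real.rpow_neg hyspos.le]
    have hpow_pos : 0 < (y s) ^ ((4:ℝ)/3) := Real.rpow_pos_of_pos hyspos _
    rw [hpow]
    have key : (-(1:ℝ)/3) * ((y s) ^ ((4:ℝ)/3))⁻¹ * y' s ≥
        (-(1:ℝ)/3) * ((y s) ^ ((4:ℝ)/3))⁻¹ * (-(c * (y s) ^ ((4:ℝ)/3) / I₀ ^ ((1:ℝ)/3))) := by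
      apply mul_le_mul_of_nonpos_left h1
      have : 0 < ((y s) ^ ((4:ℝ)/3))⁻¹ := inv_pos.mpr hpow_pos
      nlinarith
    have heq : (-(1:ℝ)/3) * ((y s) ^ ((4:ℝ)/3))⁻¹ * (-(c * (y s) ^ ((4:ℝ)/3) / I₀ ^ ((1:ℝ)/3))) = m := by
      rw [hm_def]
      field_simp
    linarith [heq ▸ key]
  have hmono : MonotoneOn w (Icc (0:ℝ) t) := by
    apply monotoneOn_of_deriv_nonneg (convex_Icc 0 t)
    · exact fun s hs => (hwderiv s hs).continuousAt.continuousWithinAt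
    · intro s hs
      have hs' : s ∈ Icc (0:ℝ) t := interior_subset hs
      exact (hwderiv s hs').differentiableAt.differentiableWithinAt
    · intro s hs
      have hs' : s ∈ Icc (0:ℝ) t := interior_subset hs
      rw [(hwderiv s hs').deriv]
      exact hwderiv_nonneg s hs'
  have hw0t : w 0 ≤ w t := hmono ⟨le_rfl, ht0⟩ ⟨ht0, le_rfl⟩ ht0
  -- unfold
  have hkey : (y 0) ^ (-(1:ℝ)/3) + m * t ≤ (y t) ^ (-(1:ℝ)/3) := by
    have : (y 0) ^ (-(1:ℝ)/3) - m * 0 ≤ (y t) ^ (-(1:ℝ)/3) - m * t := hw0t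
    linarith
  set B : ℝ := (y 0) ^ (-(1:ℝ)/3) + m * t with hB_def
  have hBpos : 0 < B := by
    have h1 : 0 < (y 0) ^ (-(1:ℝ)/3) := Real.rpow_pos_of_pos hy0 _
    have h2 : 0 ≤ m * t := mul_nonneg hm.le ht0
    rw [hB_def]; linarith
  have hB3 : B ^ 3 ≤ ((y t) ^ (-(1:ℝ)/3)) ^ 3 := pow_le_pow_left₀ hBpos.le hkey 3
  have hzt3 : ((y t) ^ (-(1:ℝ)/3)) ^ 3 = (y t)⁻¹ := by
    rw [← Real.rpow_natCast ((y t) ^ (-(1:ℝ)/3)) 3, ← Real.rpow_mul hyt.le]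
    norm_num
    exact (Real.rpow_neg_one (y t)) ▸ by rw [Real.rpow_neg hyt.le, Real.rpow_one]
  have hyB : y t ≤ (B ^ 3)⁻¹ := by
    rw [hzt3] at hB3
    have hB3pos : 0 < B ^ 3 := by positivity
    rw [← inv_inv (y t)]
    exact inv_anti₀ hB3pos hB3
  -- final algebraic identity
  have hD : (I₀ / y 0) ^ ((1:ℝ)/3) + c * t / 3 = I₀ ^ ((1:ℝ)/3) * B := by
    rw [hB_def, hm_def]
    have h1 : (I₀ / y 0) ^ ((1:ℝ)/3) = I₀ ^ ((1:ℝ)/3) * (y 0) ^ (-(1:ℝ)/3) := by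
      rw [show (-(1:ℝ)/3) = -((1:ℝ)/3) from by norm_num, Real.rpow_neg hy0.le,
        Real.div_rpow hI₀.le hy0.le, div_eq_mul_inv]
    rw [h1]
    field_simp
  have hDcube : ((I₀ / y 0) ^ ((1:ℝ)/3) + c * t / 3) ^ 3 = I₀ * B ^ 3 := by
    rw [hD, mul_pow]
    congr 1
    rw [← Real.rpow_natCast (I₀ ^ ((1:ℝ)/3)) 3, ← Real.rpow_mul hI₀.le]
    norm_num
  rw [hDcube]
  rw [div_eq_mul_inv, mul_inv]
  calc y t ≤ (B ^ 3)⁻¹ := hyB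
    _ = I₀ * (I₀⁻¹ * (B ^ 3)⁻¹) := by field_simp
    _ = I₀ * (I₀⁻¹ * (B ^ 3)⁻¹) := rfl
end

section
/- Let ρ̄ ∈ C¹ be a density profile and ψ ∈ H¹₀(h₋,h₊) a function with g∫_{h₋}^{h₊} ρ̄ ψ ψ' dx₃ < 0. Define w = (w₁, w₂, w₃) on Ω = 𝕋² × (h₋,h₊) by w₁ = -L₁ψ'(x₃) sin(x₁/L₁), w₂ = 0, w₃ = ψ(x₃) cos(x₁/L₁). Then ∫_Ω (2gρ̄ ∂₁w₁ w₃ - P'(ρ̄)ρ̄|∂₁w₁ + ∂₃w₃|²) dy = -2g(∫_{h₋}^{h₊} ρ̄ψψ' dx₃)(∫_{𝕋²} cos²(x₁/L₁) dx_h) > 0; in particular ∂₁w₁ + ∂₃w₃ = 0 pointwise, so the pressure stabilizing term vanishes and E₁(w) + E₂(w) > 0. -/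
open MeasureTheory Real Set

/-- The partial derivative `∂ᵢ f` along the `i`-th coordinate line. -/
noncomputable def pdl (i : Fin 3) (f : (Fin 3 → ℝ) → ℝ) (x : Fin 3 → ℝ) : ℝ :=
  deriv (fun s : ℝ => f (x + s • (Pi.single i 1 : Fin 3 → ℝ))) 0

/-!
Both components of `w` are built from the same profile `ψ`, so `∂₁w₁ = -ψ' cos(x₁/L₁) = -∂₃w₃`
and the pressure term drops out. What is left, `2gρ̄ ∂₁w₁ w₃ = -2g cos²(x₁/L₁) ρ̄ψψ'`, is a
product of one-variable functions of `x₁` and `x₃`, so Fubini splits its integral over the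
slab, and the sign follows from `g∫ρ̄ψψ' < 0`.
-/

theorem pdl_eq_deriv_update (i : Fin 3) (f : (Fin 3 → ℝ) → ℝ) (x : Fin 3 → ℝ) :
    pdl i f x = deriv (fun t => f (Function.update x i t)) (x i) := by
  have hline : ∀ s : ℝ, x + s • (Pi.single i 1 : Fin 3 → ℝ) = Function.update x i (x i + s) := by
    intro s
    ext j
    rcases eq_or_ne j i with rfl | hj <;> simp [*]
  simp only [pdl, hline]
  simpa using deriv_comp_const_add (fun t => f (Function.update x i t)) (x i) 0

theorem pdl_const_mul_of_ne {i j : Fin 3} (hji : j ≠ i) (c d : ℝ → ℝ) (x : Fin 3 → ℝ) :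
    pdl i (fun y => c (y j) * d (y i)) x = c (x j) * deriv d (x i) := by
  simp only [pdl_eq_deriv_update, Function.update_self, Function.update_of_ne hji,
    deriv_const_mul_field]

theorem pdl_mul_const_of_ne {i j : Fin 3} (hji : j ≠ i) (c d : ℝ → ℝ) (x : Fin 3 → ℝ) :
    pdl i (fun y => c (y i) * d (y j)) x = deriv c (x i) * d (x j) := by
  simp only [pdl_eq_deriv_update, Function.update_self, Function.update_of_ne hji,
    deriv_mul_const_field]

theorem deriv_sin_div (L t : ℝ) : deriv (fun t => sin (t / L)) t = cos (t / L) / L := by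
  simp [div_eq_mul_inv]

theorem pdl_zero_neg_mul_sin {L : ℝ} (hL : L ≠ 0) (c : ℝ → ℝ) (x : Fin 3 → ℝ) :
    pdl 0 (fun y => -L * c (y 2) * sin (y 0 / L)) x = -(c (x 2) * cos (x 0 / L)) := by
  refine (pdl_const_mul_of_ne (by decide : (2 : Fin 3) ≠ 0)
    (fun t => -L * c t) (fun u => sin (u / L)) x).trans ?_
  rw [deriv_sin_div]
  field_simp

theorem slab_eq_univ_pi (hm hp L₁ L₂ : ℝ) :
    slab hm hp L₁ L₂ = univ.pi ![Ioo 0 (2 * π * L₁), Ioo 0 (2 * π * L₂), Ioo hm hp] := by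
  ext x
  simp [slab, Fin.forall_fin_succ]

theorem setIntegral_univ_pi_prod_eq_prod {ι 𝕜 : Type*} [Fintype ι] [RCLike 𝕜] {E : ι → Type*}
    {mE : ∀ i, MeasurableSpace (E i)} {μ : (i : ι) → Measure (E i)} [∀ i, SigmaFinite (μ i)]
    (s : (i : ι) → Set (E i)) (f : (i : ι) → E i → 𝕜) :
    ∫ x in univ.pi s, ∏ i, f i (x i) ∂Measure.pi μ = ∏ i, ∫ x in s i, f i x ∂μ i := by
  rw [Measure.restrict_pi_pi, integral_fintype_prod_eq_prod]

theorem setIntegral_slab_mul (hm hp L₁ L₂ : ℝ) (F G : ℝ → ℝ) :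
    ∫ x in slab hm hp L₁ L₂, F (x 0) * G (x 2)
      = (∫ u in Ioo 0 (2 * π * L₁), F u) * volume.real (Ioo 0 (2 * π * L₂))
          * ∫ t in Ioo hm hp, G t := by
  have hprod : ∀ x : Fin 3 → ℝ, F (x 0) * G (x 2) = ∏ i, ![F, fun _ => 1, G] i (x i) := by
    intro x
    simp [Fin.prod_univ_three]
  simp only [hprod]
  rw [slab_eq_univ_pi, volume_pi, setIntegral_univ_pi_prod_eq_prod, Fin.prod_univ_three]
  simp

theorem setIntegral_prod_fst {α β : Type*} [MeasurableSpace α] [MeasurableSpace β]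
    (μ : Measure α) (ν : Measure β) [SFinite μ] [SFinite ν] (s : Set α) (t : Set β) (F : α → ℝ) :
    ∫ p in s ×ˢ t, F p.1 ∂μ.prod ν = (∫ u in s, F u ∂μ) * ν.real t := by
  simpa using setIntegral_prod_mul F (fun _ => (1 : ℝ)) s t

theorem setIntegral_Ioo_cos_div_sq {L : ℝ} (hL : 0 < L) :
    ∫ u in Ioo 0 (2 * π * L), cos (u / L) ^ 2 = π * L := by
  rw [← integral_Ioc_eq_integral_Ioo, ← intervalIntegral.integral_of_le (by positivity),
    intervalIntegral.integral_comp_div (fun u => cos u ^ 2) hL.ne',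
    mul_div_cancel_right₀ _ hL.ne', integral_cos_sq]
  simp only [zero_div, sin_zero, sin_two_pi]
  ring

theorem instability_test_function_general
    (hm hp L₁ L₂ g : ℝ) (hL₁ : 0 < L₁) (hL₂ : 0 < L₂)
    (ρ : ℝ → ℝ)
    (a : ℝ → ℝ)
    (ψ : ℝ → ℝ)
    (hneg : g * (∫ t in Ioo hm hp, ρ t * ψ t * deriv ψ t) < 0)
    (w₁ w₃ : (Fin 3 → ℝ) → ℝ)
    (hw₁ : ∀ x, w₁ x = -L₁ * deriv ψ (x 2) * Real.sin (x 0 / L₁))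
    (hw₃ : ∀ x, w₃ x = ψ (x 2) * Real.cos (x 0 / L₁)) :
    (∀ x, pdl 0 w₁ x + pdl 2 w₃ x = 0) ∧
    (∫ x in slab hm hp L₁ L₂,
        (2 * g * ρ (x 2) * pdl 0 w₁ x * w₃ x
          - a (x 2) * (pdl 0 w₁ x + pdl 2 w₃ x) ^ 2))
      = -(2 * g) * (∫ t in Ioo hm hp, ρ t * ψ t * deriv ψ t) *
          (∫ p in (Ioo 0 (2 * π * L₁)) ×ˢ (Ioo 0 (2 * π * L₂)),
            Real.cos (p.1 / L₁) ^ 2) ∧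
    0 < ∫ x in slab hm hp L₁ L₂,
        (2 * g * ρ (x 2) * pdl 0 w₁ x * w₃ x
          - a (x 2) * (pdl 0 w₁ x + pdl 2 w₃ x) ^ 2) := by
  have h₁ : ∀ x, pdl 0 w₁ x = -(deriv ψ (x 2) * cos (x 0 / L₁)) := fun x => by
    rw [funext hw₁]
    exact pdl_zero_neg_mul_sin hL₁.ne' (deriv ψ) x
  have h₃ : ∀ x, pdl 2 w₃ x = deriv ψ (x 2) * cos (x 0 / L₁) := fun x => by
    rw [funext hw₃]
    exact pdl_mul_const_of_ne (by decide : (0 : Fin 3) ≠ 2) ψ (fun u => cos (u / L₁)) x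
  have hdiv : ∀ x, pdl 0 w₁ x + pdl 2 w₃ x = 0 := fun x => by rw [h₁, h₃]; ring
  have hΩ : (∫ x in slab hm hp L₁ L₂,
        (2 * g * ρ (x 2) * pdl 0 w₁ x * w₃ x - a (x 2) * (pdl 0 w₁ x + pdl 2 w₃ x) ^ 2))
      = (∫ u in Ioo 0 (2 * π * L₁), cos (u / L₁) ^ 2) * volume.real (Ioo 0 (2 * π * L₂))
          * (-(2 * g) * ∫ t in Ioo hm hp, ρ t * ψ t * deriv ψ t) := by
    have hfactor : ∀ x : Fin 3 → ℝ,
        2 * g * ρ (x 2) * pdl 0 w₁ x * w₃ x - a (x 2) * (pdl 0 w₁ x + pdl 2 w₃ x) ^ 2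
          = cos (x 0 / L₁) ^ 2 * (-(2 * g) * (ρ (x 2) * ψ (x 2) * deriv ψ (x 2))) := fun x => by
      rw [hdiv, h₁, hw₃]
      ring
    simp only [hfactor]
    rw [← integral_const_mul]
    exact setIntegral_slab_mul hm hp L₁ L₂ (fun u => cos (u / L₁) ^ 2)
      (fun t => -(2 * g) * (ρ t * ψ t * deriv ψ t))
  refine ⟨hdiv, ?_, ?_⟩
  · rw [hΩ, Measure.volume_eq_prod, setIntegral_prod_fst _ _ _ _ (fun u => cos (u / L₁) ^ 2)]
    ring
  rw [hΩ, setIntegral_Ioo_cos_div_sq hL₁, volume_real_Ioo_of_le (by positivity), sub_zero]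
  have : 0 < -(2 * g) * ∫ t in Ioo hm hp, ρ t * ψ t * deriv ψ t := by linarith
  positivity

/-- Instability test function for small magnetic fields: with
`w₁ = -L₁ψ'(x₃)sin(x₁/L₁)`, `w₂ = 0`, `w₃ = ψ(x₃)cos(x₁/L₁)` and
`g∫ρ̄ψψ' < 0`, one has `∂₁w₁ + ∂₃w₃ = 0` pointwise and
`∫_Ω (2gρ̄ ∂₁w₁ w₃ - P'(ρ̄)ρ̄|∂₁w₁+∂₃w₃|²) = -2g(∫ρ̄ψψ')(∫cos²(x₁/L₁)) > 0`. -/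
theorem instability_test_function
    (hm hp L₁ L₂ g : ℝ) (hh : hm < hp) (hL₁ : 0 < L₁) (hL₂ : 0 < L₂) (hg : 0 < g)
    (ρ : ℝ → ℝ) (hρ : ContDiff ℝ 1 ρ)
    (a : ℝ → ℝ) (ha : ∀ t, 0 ≤ a t)
    (ψ : ℝ → ℝ) (hψ : ContDiff ℝ 1 ψ) (hbm : ψ hm = 0) (hbp : ψ hp = 0)
    (hneg : g * (∫ t in Ioo hm hp, ρ t * ψ t * deriv ψ t) < 0)
    (w₁ w₃ : (Fin 3 → ℝ) → ℝ)
    (hw₁ : ∀ x, w₁ x = -L₁ * deriv ψ (x 2) * Real.sin (x 0 / L₁))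
    (hw₃ : ∀ x, w₃ x = ψ (x 2) * Real.cos (x 0 / L₁)) :
    (∀ x, pdl 0 w₁ x + pdl 2 w₃ x = 0) ∧
    (∫ x in slab hm hp L₁ L₂,
        (2 * g * ρ (x 2) * pdl 0 w₁ x * w₃ x
          - a (x 2) * (pdl 0 w₁ x + pdl 2 w₃ x) ^ 2))
      = -(2 * g) * (∫ t in Ioo hm hp, ρ t * ψ t * deriv ψ t) *
          (∫ p in (Ioo 0 (2 * π * L₁)) ×ˢ (Ioo 0 (2 * π * L₂)),
            Real.cos (p.1 / L₁) ^ 2) ∧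
    0 < ∫ x in slab hm hp L₁ L₂,
        (2 * g * ρ (x 2) * pdl 0 w₁ x * w₃ x
          - a (x 2) * (pdl 0 w₁ x + pdl 2 w₃ x) ^ 2) :=
  instability_test_function_general hm hp L₁ L₂ g hL₁ hL₂ ρ a ψ hneg w₁ w₃ hw₁ hw₃
end

section
/- Let ξ = (ξ₁, ξ₂) ∈ ℝ² with ξ ≠ 0, M̄₁, λ > 0, and ψ₀ ∈ H¹₀(h₋,h₊) with g⟦ρ̄⟧ψ₀²(0) - λξ₁²M̄₁² ∫_{h₋}^{h₊}(ψ₀² + |ψ₀'|²/|ξ|²) dx₃ > 0. Define θ₀ := -ξ₂ψ₀'/|ξ|² and φ₀ := ξ₁⁻¹(gρ̄ψ₀/(P'(ρ̄)ρ̄) - ψ₀' - ξ₂θ₀) (assuming ξ₁ ≠ 0). Then the Fourier-reduced energy Ẽ(φ₀,θ₀,ψ₀) := g⟦ρ̄⟧ψ₀²(0) + ∫_{h₋}^{h₊}(gρ̄'ψ₀² + 2gρ̄ψ₀(ξ₁φ₀+ξ₂θ₀+ψ₀') - P'(ρ̄)ρ̄(ξ₁φ₀+ξ₂θ₀+ψ₀')²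 - λM̄₁²(ξ₁²(θ₀²+ψ₀²) + (ξ₂θ₀+ψ₀')²)) dx₃ equals g⟦ρ̄⟧ψ₀²(0) - λξ₁²M̄₁²∫_{h₋}^{h₊}(ψ₀² + |ψ₀'|²/|ξ|²) dx₃ > 0. -/
open MeasureTheory Real Set

/-! Completing the square in the reduced energy density: using `a ρ' = -g ρ²` to rewrite the
buoyancy term `g ρ' ψ²`, the density equals `-λ ξ₁² M² (ψ² + ψ'²/|ξ|²)` minus two
squares, one in `ξ₁ φ + ξ₂ θ + ψ' - g ρ ψ / a` and one in `θ + ξ₂ ψ' / |ξ|²`. The choices of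
`θ₀` and `φ₀` make both squares vanish, so the energy integral is the hypothesised positive
quantity. -/

lemma reducedEnergyDensity_eq_sub_squares {g lam M a ρ ρ' ξ₁ ξ₂ ψ dψ φ θ : ℝ}
    (ha : a ≠ 0) (hξ : ξ₁ ^ 2 + ξ₂ ^ 2 ≠ 0) (hrel : a * ρ' = -(g * ρ ^ 2)) :
    g * ρ' * ψ ^ 2 + 2 * g * ρ * ψ * (ξ₁ * φ + ξ₂ * θ + dψ)
        - a * (ξ₁ * φ + ξ₂ * θ + dψ) ^ 2
        - lam * M ^ 2 * (ξ₁ ^ 2 * (θ ^ 2 + ψ ^ 2) + (ξ₂ * θ + dψ) ^ 2)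
      = -(lam * ξ₁ ^ 2 * M ^ 2) * (ψ ^ 2 + dψ ^ 2 / (ξ₁ ^ 2 + ξ₂ ^ 2))
        - a * (ξ₁ * φ + ξ₂ * θ + dψ - g * ρ * ψ / a) ^ 2
        - lam * M ^ 2 * (ξ₁ ^ 2 + ξ₂ ^ 2) * (θ + ξ₂ * dψ / (ξ₁ ^ 2 + ξ₂ ^ 2)) ^ 2 := by
  have hρ' : ρ' = -(g * ρ ^ 2) / a := by rw [← hrel, mul_div_cancel_left₀ _ ha]
  subst hρ'
  field_simp
  ring

lemma reducedEnergyDensity_eq_of_optimal {g lam M a ρ ρ' ξ₁ ξ₂ ψ dψ : ℝ}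
    (ha : a ≠ 0) (hξ₁ : ξ₁ ≠ 0) (hrel : a * ρ' = -(g * ρ ^ 2)) :
    let θ := -ξ₂ * dψ / (ξ₁ ^ 2 + ξ₂ ^ 2)
    let φ := ξ₁⁻¹ * (g * ρ * ψ / a - dψ - ξ₂ * θ)
    g * ρ' * ψ ^ 2 + 2 * g * ρ * ψ * (ξ₁ * φ + ξ₂ * θ + dψ)
        - a * (ξ₁ * φ + ξ₂ * θ + dψ) ^ 2
        - lam * M ^ 2 * (ξ₁ ^ 2 * (θ ^ 2 + ψ ^ 2) + (ξ₂ * θ + dψ) ^ 2)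
      = -(lam * ξ₁ ^ 2 * M ^ 2) * (ψ ^ 2 + dψ ^ 2 / (ξ₁ ^ 2 + ξ₂ ^ 2)) := by
  intro θ φ
  have hξ : ξ₁ ^ 2 + ξ₂ ^ 2 ≠ 0 := by positivity
  have hφ : ξ₁ * φ + ξ₂ * θ + dψ - g * ρ * ψ / a = 0 := by
    simp only [φ]
    field_simp
    ring
  have hθ : θ + ξ₂ * dψ / (ξ₁ ^ 2 + ξ₂ ^ 2) = 0 := by
    simp only [θ]
    ring
  rw [reducedEnergyDensity_eq_sub_squares ha hξ hrel, hφ, hθ]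
  ring

theorem horizontal_field_instability_general
    (hm hp g lam M₁ jmp ξ₁ ξ₂ : ℝ)
    (hξ₁ : ξ₁ ≠ 0)
    (ρ ρ' a : ℝ → ℝ) (ha : ∀ t, 0 < a t)
    (hrel : ∀ t, a t * ρ' t = -(g * (ρ t) ^ 2))
    (ψ₀ : ℝ → ℝ)
    (hpos : 0 < g * jmp * (ψ₀ 0) ^ 2
      - lam * ξ₁ ^ 2 * M₁ ^ 2 *
        ∫ t in Ioo hm hp, ((ψ₀ t) ^ 2 + (deriv ψ₀ t) ^ 2 / (ξ₁ ^ 2 + ξ₂ ^ 2)))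
    (θ₀ φ₀ : ℝ → ℝ)
    (hθ₀ : ∀ t, θ₀ t = -ξ₂ * deriv ψ₀ t / (ξ₁ ^ 2 + ξ₂ ^ 2))
    (hφ₀ : ∀ t, φ₀ t = ξ₁⁻¹ * (g * ρ t * ψ₀ t / a t - deriv ψ₀ t - ξ₂ * θ₀ t)) :
    (g * jmp * (ψ₀ 0) ^ 2
        + ∫ t in Ioo hm hp,
            (g * ρ' t * (ψ₀ t) ^ 2
              + 2 * g * ρ t * ψ₀ t * (ξ₁ * φ₀ t + ξ₂ * θ₀ t + deriv ψ₀ t)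
              - a t * (ξ₁ * φ₀ t + ξ₂ * θ₀ t + deriv ψ₀ t) ^ 2
              - lam * M₁ ^ 2 * (ξ₁ ^ 2 * ((θ₀ t) ^ 2 + (ψ₀ t) ^ 2)
                  + (ξ₂ * θ₀ t + deriv ψ₀ t) ^ 2)))
      = g * jmp * (ψ₀ 0) ^ 2
        - lam * ξ₁ ^ 2 * M₁ ^ 2 *
            (∫ t in Ioo hm hp, ((ψ₀ t) ^ 2 + (deriv ψ₀ t) ^ 2 / (ξ₁ ^ 2 + ξ₂ ^ 2))) ∧
    0 < g * jmp * (ψ₀ 0) ^ 2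
        + ∫ t in Ioo hm hp,
            (g * ρ' t * (ψ₀ t) ^ 2
              + 2 * g * ρ t * ψ₀ t * (ξ₁ * φ₀ t + ξ₂ * θ₀ t + deriv ψ₀ t)
              - a t * (ξ₁ * φ₀ t + ξ₂ * θ₀ t + deriv ψ₀ t) ^ 2
              - lam * M₁ ^ 2 * (ξ₁ ^ 2 * ((θ₀ t) ^ 2 + (ψ₀ t) ^ 2)
                  + (ξ₂ * θ₀ t + deriv ψ₀ t) ^ 2)) := by
  have hintegral : (∫ t in Ioo hm hp,
      (g * ρ' t * (ψ₀ t) ^ 2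
        + 2 * g * ρ t * ψ₀ t * (ξ₁ * φ₀ t + ξ₂ * θ₀ t + deriv ψ₀ t)
        - a t * (ξ₁ * φ₀ t + ξ₂ * θ₀ t + deriv ψ₀ t) ^ 2
        - lam * M₁ ^ 2 * (ξ₁ ^ 2 * ((θ₀ t) ^ 2 + (ψ₀ t) ^ 2)
            + (ξ₂ * θ₀ t + deriv ψ₀ t) ^ 2)))
      = -(lam * ξ₁ ^ 2 * M₁ ^ 2) *
          ∫ t in Ioo hm hp, ((ψ₀ t) ^ 2 + (deriv ψ₀ t) ^ 2 / (ξ₁ ^ 2 + ξ₂ ^ 2)) := by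
    rw [← integral_const_mul]
    refine integral_congr_ae (Filter.Eventually.of_forall fun t => ?_)
    dsimp only
    rw [hφ₀ t, hθ₀ t]
    exact reducedEnergyDensity_eq_of_optimal (ha t).ne' hξ₁ (hrel t)
  rw [hintegral]
  exact ⟨by ring, by linarith⟩

/-- Horizontal-field instability: completing the square in the
Fourier-reduced energy. With `θ₀ = -ξ₂ψ₀'/|ξ|²` and
`φ₀ = ξ₁⁻¹(gρ̄ψ₀/(P'(ρ̄)ρ̄) - ψ₀' - ξ₂θ₀)`, the reduced energy
`Ẽ(φ₀,θ₀,ψ₀)` equals `g⟦ρ̄⟧ψ₀(0)² - λξ₁²M̄₁²∫(ψ₀² + |ψ₀'|²/|ξ|²)`, which is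
positive by hypothesis. -/
theorem horizontal_field_instability
    (hm hp g lam M₁ jmp ξ₁ ξ₂ : ℝ)
    (hhm : hm < 0) (hhp : 0 < hp) (hg : 0 < g) (hlam : 0 < lam) (hM₁ : 0 < M₁)
    (hjmp : 0 < jmp) (hξ₁ : ξ₁ ≠ 0)
    (ρ ρ' a : ℝ → ℝ) (ha : ∀ t, 0 < a t)
    (hrel : ∀ t, a t * ρ' t = -(g * (ρ t) ^ 2))
    (ψ₀ : ℝ → ℝ) (hψ₀ : ContDiff ℝ 1 ψ₀) (hbm : ψ₀ hm = 0) (hbp : ψ₀ hp = 0)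
    (hpos : 0 < g * jmp * (ψ₀ 0) ^ 2
      - lam * ξ₁ ^ 2 * M₁ ^ 2 *
        ∫ t in Ioo hm hp, ((ψ₀ t) ^ 2 + (deriv ψ₀ t) ^ 2 / (ξ₁ ^ 2 + ξ₂ ^ 2)))
    (θ₀ φ₀ : ℝ → ℝ)
    (hθ₀ : ∀ t, θ₀ t = -ξ₂ * deriv ψ₀ t / (ξ₁ ^ 2 + ξ₂ ^ 2))
    (hφ₀ : ∀ t, φ₀ t = ξ₁⁻¹ * (g * ρ t * ψ₀ t / a t - deriv ψ₀ t - ξ₂ * θ₀ t)) :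
    (g * jmp * (ψ₀ 0) ^ 2
        + ∫ t in Ioo hm hp,
            (g * ρ' t * (ψ₀ t) ^ 2
              + 2 * g * ρ t * ψ₀ t * (ξ₁ * φ₀ t + ξ₂ * θ₀ t + deriv ψ₀ t)
              - a t * (ξ₁ * φ₀ t + ξ₂ * θ₀ t + deriv ψ₀ t) ^ 2
              - lam * M₁ ^ 2 * (ξ₁ ^ 2 * ((θ₀ t) ^ 2 + (ψ₀ t) ^ 2)
                  + (ξ₂ * θ₀ t + deriv ψ₀ t) ^ 2)))
      = g * jmp * (ψ₀ 0) ^ 2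
        - lam * ξ₁ ^ 2 * M₁ ^ 2 *
            (∫ t in Ioo hm hp, ((ψ₀ t) ^ 2 + (deriv ψ₀ t) ^ 2 / (ξ₁ ^ 2 + ξ₂ ^ 2))) ∧
    0 < g * jmp * (ψ₀ 0) ^ 2
        + ∫ t in Ioo hm hp,
            (g * ρ' t * (ψ₀ t) ^ 2
              + 2 * g * ρ t * ψ₀ t * (ξ₁ * φ₀ t + ξ₂ * θ₀ t + deriv ψ₀ t)
              - a t * (ξ₁ * φ₀ t + ξ₂ * θ₀ t + deriv ψ₀ t) ^ 2
              - lam * M₁ ^ 2 * (ξ₁ ^ 2 * ((θ₀ t) ^ 2 + (ψ₀ t) ^ 2)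
                  + (ξ₂ * θ₀ t + deriv ψ₀ t) ^ 2)) :=
  horizontal_field_instability_general hm hp g lam M₁ jmp ξ₁ ξ₂ hξ₁ ρ ρ' a ha hrel ψ₀ hpos θ₀ φ₀ hθ₀
    hφ₀
end
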